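/- arXiv:1805.03289 — 7 statements merged into one kernel-verified Lean document; each statement's English description precedes it below -/
import Mathlib

section
/- If χ : ℝ^N → ℝ is a norm invariant under permutation of coordinates and λ, λ' ∈ C satisfy λ ⪯ λ' (λ is majorized by λ'), then χ(λ) ≤ χ(λ'). -/
/-!
A symmetric norm is convex and permutation invariant, so it cannot increase under a
"Robin Hood" transfer, which moves an amount `δ ≤ y i - y j` from a richer coordinate `i` to a
poorer coordinate `j`: the result is a convex combination of `y` and `y ∘ swap i j`. If `l` is
antitone and majorized by `l'`, then `l` arises from `l'` by finitely many such transfers: take `i`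
the first index where `l' i ≠ l i` (there `l' i > l i`), `j` the first later index with
`l' j < l j`, and transfer the largest amount preserving majorization; this makes `l'` agree
with `l` at `i` or at `j`.
-/

open Finset

namespace Majorization

section Transfer

variable {ι : Type*} [DecidableEq ι]

noncomputable def transfer (y : ι → ℝ) (i j : ι) (δ : ℝ) : ι → ℝ :=
  y - Pi.single i δ + Pi.single j δ

def IsTransferOf (x y : ι → ℝ) : Prop :=
  ∃ i j δ, 0 ≤ δ ∧ δ ≤ y i - y j ∧ x = transfer y i j δ

@[simp]
theorem transfer_zero (y : ι → ℝ) (i j : ι) : transfer y i j 0 = y := by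
  simp [transfer]

theorem transfer_apply_left (y : ι → ℝ) {i j : ι} (hij : i ≠ j) (δ : ℝ) :
    transfer y i j δ i = y i - δ := by
  simp [transfer, hij]

theorem transfer_apply_right (y : ι → ℝ) {i j : ι} (hij : i ≠ j) (δ : ℝ) :
    transfer y i j δ j = y j + δ := by
  simp [transfer, hij.symm]

theorem transfer_apply_of_ne (y : ι → ℝ) {i j m : ι} (hi : m ≠ i) (hj : m ≠ j) (δ : ℝ) :
    transfer y i j δ m = y m := by
  simp [transfer, hi, hj]

theorem sub_smul_transfer (y : ι → ℝ) (i j : ι) (δ : ℝ) :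
    (y i - y j) • transfer y i j δ = (y i - y j - δ) • y + δ • (y ∘ Equiv.swap i j) := by
  funext m
  simp only [transfer, Pi.add_apply, Pi.sub_apply, Pi.smul_apply, Function.comp_apply,
    Pi.single_apply, Equiv.swap_apply_def, smul_eq_mul]
  split_ifs <;> subst_vars <;> ring

theorem apply_transfer_le (χ : (ι → ℝ) → ℝ) (hadd : ∀ x y, χ (x + y) ≤ χ x + χ y)
    (hhom : ∀ (c : ℝ) (x), χ (c • x) = |c| * χ x)
    (hsym : ∀ (σ : Equiv.Perm ι) (x), χ (x ∘ σ) = χ x)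
    {y : ι → ℝ} {i j : ι} {δ : ℝ} (hδ : 0 ≤ δ) (hδy : δ ≤ y i - y j) :
    χ (transfer y i j δ) ≤ χ y := by
  obtain hd | hd := (hδ.trans hδy).eq_or_lt
  · obtain rfl : δ = 0 := by linarith
    simp
  refine le_of_mul_le_mul_left ?_ hd
  calc (y i - y j) * χ (transfer y i j δ)
      = χ ((y i - y j - δ) • y + δ • (y ∘ Equiv.swap i j)) := by
        rw [← sub_smul_transfer, hhom, abs_of_pos hd]
    _ ≤ (y i - y j - δ) * χ y + δ * χ y := by
        grw [hadd, hhom, hhom, hsym, abs_of_nonneg (sub_nonneg.2 hδy), abs_of_nonneg hδ]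
    _ = (y i - y j) * χ y := by ring

variable [Fintype ι]

theorem card_filter_ne_transfer_lt {x y : ι → ℝ} {i j : ι} (hij : i ≠ j)
    (hi : x i < y i) (hj : y j < x j) :
    #{m | x m ≠ transfer y i j (min (y i - x i) (x j - y j)) m} < #{m | x m ≠ y m} := by
  set δ := min (y i - x i) (x j - y j)
  refine card_lt_card <| (ssubset_iff_of_subset fun m hm => ?_).2 ?_
  · simp only [mem_filter, mem_univ, true_and] at hm ⊢
    intro heq
    by_cases hmi : m = i
    · exact hi.ne (hmi ▸ heq)
    by_cases hmj : m = j
    · exact hj.ne' (hmj ▸ heq)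
    exact hm (heq.trans (transfer_apply_of_ne y hmi hmj δ).symm)
  obtain hδ | hδ := min_choice (y i - x i) (x j - y j)
  · refine ⟨i, by simpa using hi.ne, ?_⟩
    simp [transfer_apply_left y hij, δ, hδ]
  · refine ⟨j, by simpa using hj.ne', ?_⟩
    simp [transfer_apply_right y hij, δ, hδ]

end Transfer

variable {N : ℕ}

def partialSum (x : Fin N → ℝ) (k : ℕ) : ℝ :=
  ∑ m ∈ univ.filter (fun m : Fin N => (m : ℕ) < k), x m

/-- The relation `x ⪯ y`, with prefix sums taken in the given order of the coordinates. -/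
def Majorized (x y : Fin N → ℝ) : Prop :=
  (∀ k ≤ N, partialSum x k ≤ partialSum y k) ∧ ∑ m, x m = ∑ m, y m

theorem partialSum_transfer (y : Fin N → ℝ) (i j : Fin N) (δ : ℝ) (k : ℕ) :
    partialSum (transfer y i j δ) k =
      partialSum y k - (if (i : ℕ) < k then δ else 0) + (if (j : ℕ) < k then δ else 0) := by
  simp [partialSum, transfer, sum_add_distrib, sum_sub_distrib, sum_pi_single']

theorem sum_transfer (y : Fin N → ℝ) (i j : Fin N) (δ : ℝ) :
    ∑ m, transfer y i j δ m = ∑ m, y m := by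
  simp [transfer, sum_add_distrib, sum_sub_distrib]

variable {l l' : Fin N → ℝ}

theorem Majorized.exists_first_gain (h : Majorized l l') (hne : l ≠ l') :
    ∃ i, l i < l' i ∧ ∀ m < i, l m = l' m := by
  obtain ⟨i, hi, hmin⟩ : ∃ i, Minimal (· ∈ ({m | l m ≠ l' m} : Finset (Fin N))) i :=
    exists_minimal (filter_nonempty_iff.2 (by simpa [funext_iff] using hne))
  have hbefore : ∀ m < i, l m = l' m := fun m hm => by
    by_contra hne'
    exact (hmin (by simpa using hne') hm.le).not_gt hm
  refine ⟨i, (Ne.lt_or_gt (by simpa using hi)).resolve_right fun hlt => ?_, hbefore⟩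
  have hsum : partialSum l' (i + 1) < partialSum l (i + 1) := by
    refine sum_lt_sum (fun m hm => ?_) ⟨i, by simp, hlt⟩
    obtain hm | rfl := (Fin.le_iff_val_le_val.2 (Nat.lt_succ_iff.1 (by simpa using hm))).lt_or_eq
    exacts [(hbefore m hm).ge, hlt.le]
  exact hsum.not_ge (h.1 _ i.isLt)

theorem Majorized.exists_first_loss (h : Majorized l l') {i : Fin N} (hi : l i < l' i)
    (hbefore : ∀ m < i, l m = l' m) :
    ∃ j, i < j ∧ l' j < l j ∧ ∀ m < j, l m ≤ l' m := by
  obtain ⟨j, hj, hmin⟩ : ∃ j, Minimal (· ∈ ({m | i < m ∧ l' m < l m} : Finset (Fin N))) j := by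
    refine exists_minimal (filter_nonempty_iff.2 (not_forall_not.1 fun hT => ?_))
    have : ∑ m, l m < ∑ m, l' m := by
      refine sum_lt_sum (fun m _ => ?_) ⟨i, mem_univ _, hi⟩
      obtain hm | rfl | hm := lt_trichotomy m i
      exacts [(hbefore m hm).le, hi.le, not_lt.1 fun h' => hT m ⟨mem_univ _, hm, h'⟩]
    exact this.ne h.2
  simp only [mem_filter, mem_univ, true_and] at hj hmin
  refine ⟨j, hj.1, hj.2, fun m hm => ?_⟩
  obtain hm' | rfl | hm' := lt_trichotomy m i
  · exact (hbefore m hm').le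
  · exact hi.le
  · exact not_lt.1 fun h' => (hmin ⟨hm', h'⟩ hm.le).not_gt hm

theorem Majorized.transfer {i j : Fin N} (h : Majorized l l') (hij : i < j) {δ : ℝ}
    (hδ : δ ≤ l' i - l i) (hbefore : ∀ m < j, l m ≤ l' m) :
    Majorized l (transfer l' i j δ) := by
  refine ⟨fun k hk => ?_, h.2.trans (sum_transfer l' i j δ).symm⟩
  rw [partialSum_transfer]
  by_cases hjk : (j : ℕ) < k
  · have hik : (i : ℕ) < k := (Fin.lt_def.1 hij).trans hjk
    simpa [hjk, hik] using h.1 k hk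
  by_cases hik : (i : ℕ) < k
  · have hgain : l' i - l i ≤ partialSum l' k - partialSum l k := by
      rw [partialSum, partialSum, ← sum_sub_distrib]
      refine single_le_sum (f := fun m => l' m - l m) (fun m hm => ?_) (by simpa using hik)
      have hmk : (m : ℕ) < k := by simpa using hm
      exact sub_nonneg.2 (hbefore m (Fin.lt_def.2 (hmk.trans_le (not_lt.1 hjk))))
    simp only [hik, hjk, if_true, if_false]
    linarith
  · simpa [hik, hjk] using h.1 k hk

theorem Majorized.exists_isTransferOf (hl : Antitone l) (h : Majorized l l') (hne : l ≠ l') :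
    ∃ l'', IsTransferOf l'' l' ∧ Majorized l l'' ∧ #{m | l m ≠ l'' m} < #{m | l m ≠ l' m} := by
  obtain ⟨i, hi, hbefore_i⟩ := h.exists_first_gain hne
  obtain ⟨j, hij, hj, hbefore_j⟩ := h.exists_first_loss hi hbefore_i
  have hδi := min_le_left (l' i - l i) (l j - l' j)
  have hδj := min_le_right (l' i - l i) (l j - l' j)
  refine ⟨_, ⟨i, j, _, le_min (by linarith) (by linarith), ?_, rfl⟩,
    h.transfer hij hδi hbefore_j, card_filter_ne_transfer_lt hij.ne hi hj⟩
  linarith [hl hij.le]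

theorem Majorized.reflTransGen_isTransferOf (hl : Antitone l) (h : Majorized l l') :
    Relation.ReflTransGen IsTransferOf l l' := by
  induction hn : #{m | l m ≠ l' m} using Nat.strong_induction_on generalizing l' with
  | _ n ih =>
  by_cases hne : l = l'
  · exact hne ▸ .refl
  obtain ⟨l'', hstep, h'', hcard⟩ := h.exists_isTransferOf hl hne
  exact (ih _ (hn ▸ hcard) h'' rfl).tail hstep

end Majorization

theorem symmetric_norm_mono_of_majorize_general
    (N : ℕ) (χ : (Fin N → ℝ) → ℝ)
    (hadd : ∀ x y, χ (x + y) ≤ χ x + χ y)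
    (hhom : ∀ (c : ℝ) (x), χ (c • x) = |c| * χ x)
    (hsym : ∀ (σ : Equiv.Perm (Fin N)) (x), χ (x ∘ σ) = χ x)
    (l l' : Fin N → ℝ) (hl : Antitone l)
    (hmaj : (∀ k : ℕ, k ≤ N →
        ∑ i ∈ Finset.univ.filter (fun i : Fin N => (i : ℕ) < k), l i ≤
          ∑ i ∈ Finset.univ.filter (fun i : Fin N => (i : ℕ) < k), l' i) ∧
      ∑ i, l i = ∑ i, l' i) :
    χ l ≤ χ l' := by
  have hchain : Relation.ReflTransGen Majorization.IsTransferOf l l' :=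
    Majorization.Majorized.reflTransGen_isTransferOf hl hmaj
  clear hmaj
  induction hchain with
  | refl => exact le_rfl
  | tail _ hstep ih =>
    obtain ⟨i, j, δ, hδ, hδy, rfl⟩ := hstep
    exact ih.trans (Majorization.apply_transfer_le χ hadd hhom hsym hδ hδy)

/-- A symmetric norm is monotone with respect to majorization. -/
theorem symmetric_norm_mono_of_majorize
    (N : ℕ) (χ : (Fin N → ℝ) → ℝ)
    (hadd : ∀ x y, χ (x + y) ≤ χ x + χ y)
    (hhom : ∀ (c : ℝ) (x), χ (c • x) = |c| * χ x)
    (hdef : ∀ x, χ x = 0 → x = 0)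
    (hsym : ∀ (σ : Equiv.Perm (Fin N)) (x), χ (x ∘ σ) = χ x)
    (l l' : Fin N → ℝ) (hl : Antitone l) (hl' : Antitone l')
    (hmaj : (∀ k : ℕ, k ≤ N →
        ∑ i ∈ Finset.univ.filter (fun i : Fin N => (i : ℕ) < k), l i ≤
          ∑ i ∈ Finset.univ.filter (fun i : Fin N => (i : ℕ) < k), l' i) ∧
      ∑ i, l i = ∑ i, l' i) :
    χ l ≤ χ l' :=
  symmetric_norm_mono_of_majorize_general N χ hadd hhom hsym l l' hl hmaj
end

section
/- For Hermitian matrices h, h' of size N and any symmetric norm χ on ℝ^N, χ of the eigenvalue vector of h + h' is at most χ of the eigenvalue vector of h plus χ of the eigenvalue vector of h' (eigenvalues listed in decreasing order). -/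
/-!
Let `V` be a unitary diagonalizing `h + h'`. Reading off the diagonal of
`V* (h + h') V = V* h V + V* h' V` in the eigenbases of `h` and `h'` expresses the spectrum
of `h + h'` as `D λ(h) + D' λ(h')`, where `D` and `D'` are doubly stochastic, with entries the
squared moduli of the entries of a unitary matrix. By Birkhoff's theorem a doubly stochastic
matrix is a convex combination of permutation matrices, so a convex, permutation-invariant
function cannot increase under it; hence `χ (D x) ≤ χ x`, and the triangle inequality finishes
the proof.
-/

open Matrix Unitary

theorem ConvexOn.apply_mulVec_le_of_mem_doublyStochastic {n : Type*} [Fintype n] [DecidableEq n]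
    {f : (n → ℝ) → ℝ} (hf : ConvexOn ℝ Set.univ f)
    (hperm : ∀ (σ : Equiv.Perm n) x, f (x ∘ σ) = f x)
    {D : Matrix n n ℝ} (hD : D ∈ doublyStochastic ℝ n) (x : n → ℝ) : f (D *ᵥ x) ≤ f x := by
  obtain ⟨w, hw₀, hw₁, rfl⟩ := exists_eq_sum_perm_of_mem_doublyStochastic hD
  calc f ((∑ σ, w σ • σ.permMatrix ℝ) *ᵥ x) = f (∑ σ, w σ • (x ∘ σ)) := by
        simp only [sum_mulVec, smul_mulVec, permMatrix_mulVec]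
    _ ≤ ∑ σ, w σ • f (x ∘ σ) :=
        hf.map_sum_le (fun σ _ => hw₀ σ) hw₁ (fun _ _ => Set.mem_univ _)
    _ = f x := by simp only [hperm, ← Finset.sum_smul, hw₁, one_smul]

namespace Matrix

variable {𝕜 n : Type*} [RCLike 𝕜] [Fintype n] [DecidableEq n]

theorem map_norm_sq_mem_doublyStochastic_of_mem_unitaryGroup {W : Matrix n n 𝕜}
    (hW : W ∈ unitaryGroup n 𝕜) :
    W.map (‖·‖ ^ 2) ∈ doublyStochastic ℝ n := by
  have sum_row {V : Matrix n n 𝕜} (hV : V * star V = 1) (i : n) : ∑ j, ‖V i j‖ ^ 2 = 1 := by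
    have hii := congr_fun₂ hV i i
    simp only [mul_apply, star_apply, RCLike.star_def, RCLike.mul_conj, one_apply_eq] at hii
    exact_mod_cast hii
  rw [mem_doublyStochastic_iff_sum]
  refine ⟨fun _ _ => by simp only [map_apply]; positivity,
    sum_row (mem_unitaryGroup_iff.mp hW), fun j => ?_⟩
  simpa [star_apply] using sum_row (V := star W) (by simpa using mem_unitaryGroup_iff'.mp hW) j

theorem diag_mul_diagonal_mul_star (W : Matrix n n 𝕜) (d : n → ℝ) :
    (W * diagonal (RCLike.ofReal ∘ d) * star W).diag =
      RCLike.ofReal ∘ (W.map (‖·‖ ^ 2) *ᵥ d) := by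
  ext i
  rw [diag_apply, mul_apply]
  simp only [mul_diagonal, star_apply, RCLike.star_def, Function.comp_apply, mulVec, dotProduct,
    map_apply]
  push_cast
  refine Finset.sum_congr rfl fun j _ => ?_
  rw [mul_right_comm, RCLike.mul_conj, mul_comm]

namespace IsHermitian

theorem diag_star_mul_mul {A : Matrix n n 𝕜} (hA : A.IsHermitian) (V : Matrix n n 𝕜) :
    (star V * A * V).diag =
      RCLike.ofReal ∘ ((star V * hA.eigenvectorUnitary).map (‖·‖ ^ 2) *ᵥ hA.eigenvalues) := by
  rw [← diag_mul_diagonal_mul_star]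
  conv_lhs => rw [hA.spectral_theorem, conjStarAlgAut_apply]
  simp only [star_mul, star_star, Matrix.mul_assoc]

theorem exists_eigenvalues_add_eq_mulVec_add_mulVec {A B : Matrix n n 𝕜} (hA : A.IsHermitian)
    (hB : B.IsHermitian) (hAB : (A + B).IsHermitian) :
    ∃ D ∈ doublyStochastic ℝ n, ∃ D' ∈ doublyStochastic ℝ n,
      hAB.eigenvalues = D *ᵥ hA.eigenvalues + D' *ᵥ hB.eigenvalues := by
  set V : Matrix n n 𝕜 := (hAB.eigenvectorUnitary : Matrix n n 𝕜)
  have hV : star V ∈ unitaryGroup n 𝕜 := star_mem hAB.eigenvectorUnitary.2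
  refine ⟨_, map_norm_sq_mem_doublyStochastic_of_mem_unitaryGroup
      (mul_mem hV hA.eigenvectorUnitary.2),
    _, map_norm_sq_mem_doublyStochastic_of_mem_unitaryGroup
      (mul_mem hV hB.eigenvectorUnitary.2), ?_⟩
  have hdiag : (star V * (A + B) * V).diag = RCLike.ofReal ∘ hAB.eigenvalues := by
    simpa using congr_arg diag hAB.conjStarAlgAut_star_eigenvectorUnitary
  rw [Matrix.mul_add, Matrix.add_mul, diag_add, hA.diag_star_mul_mul, hB.diag_star_mul_mul]
    at hdiag
  funext i
  have hi := congr_fun hdiag i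
  simp only [Pi.add_apply, Function.comp_apply] at hi
  exact_mod_cast hi.symm

end IsHermitian

end Matrix

theorem symmetric_norm_spectrum_subadditive_general
    (N : ℕ) (χ : (Fin N → ℝ) → ℝ)
    (hadd : ∀ x y, χ (x + y) ≤ χ x + χ y)
    (hhom : ∀ (c : ℝ) (x), χ (c • x) = |c| * χ x)
    (hsym : ∀ (σ : Equiv.Perm (Fin N)) (x), χ (x ∘ σ) = χ x)
    (h h' : Matrix (Fin N) (Fin N) ℂ)
    (hh : h.IsHermitian) (hh' : h'.IsHermitian) (hhh : (h + h').IsHermitian)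
    (μ μ' μ'' : Fin N → ℝ)
    (hμ : ∃ σ : Equiv.Perm (Fin N), μ = hh.eigenvalues ∘ σ)
    (hμ' : ∃ σ : Equiv.Perm (Fin N), μ' = hh'.eigenvalues ∘ σ)
    (hμ'' : ∃ σ : Equiv.Perm (Fin N), μ'' = hhh.eigenvalues ∘ σ) :
    χ μ'' ≤ χ μ + χ μ' := by
  obtain ⟨σ, rfl⟩ := hμ
  obtain ⟨σ', rfl⟩ := hμ'
  obtain ⟨σ'', rfl⟩ := hμ''
  have hconvex : ConvexOn ℝ Set.univ χ :=
    (Seminorm.of χ hadd fun c x => by rw [hhom, Real.norm_eq_abs]).convexOn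
  obtain ⟨D, hD, D', hD', hsum⟩ := hh.exists_eigenvalues_add_eq_mulVec_add_mulVec hh' hhh
  rw [hsym, hsym, hsym, hsum]
  calc χ (D *ᵥ hh.eigenvalues + D' *ᵥ hh'.eigenvalues)
      ≤ χ (D *ᵥ hh.eigenvalues) + χ (D' *ᵥ hh'.eigenvalues) := hadd _ _
    _ ≤ χ hh.eigenvalues + χ hh'.eigenvalues :=
      add_le_add (hconvex.apply_mulVec_le_of_mem_doublyStochastic hsym hD _)
        (hconvex.apply_mulVec_le_of_mem_doublyStochastic hsym hD' _)

/-- Subadditivity of a symmetric norm applied to ordered spectra of Hermitian matrices. -/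
theorem symmetric_norm_spectrum_subadditive
    (N : ℕ) (χ : (Fin N → ℝ) → ℝ)
    (hadd : ∀ x y, χ (x + y) ≤ χ x + χ y)
    (hhom : ∀ (c : ℝ) (x), χ (c • x) = |c| * χ x)
    (hdef : ∀ x, χ x = 0 → x = 0)
    (hsym : ∀ (σ : Equiv.Perm (Fin N)) (x), χ (x ∘ σ) = χ x)
    (h h' : Matrix (Fin N) (Fin N) ℂ)
    (hh : h.IsHermitian) (hh' : h'.IsHermitian) (hhh : (h + h').IsHermitian)
    (μ μ' μ'' : Fin N → ℝ)
    (hμa : Antitone μ) (hμ'a : Antitone μ') (hμ''a : Antitone μ'')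
    (hμ : ∃ σ : Equiv.Perm (Fin N), μ = hh.eigenvalues ∘ σ)
    (hμ' : ∃ σ : Equiv.Perm (Fin N), μ' = hh'.eigenvalues ∘ σ)
    (hμ'' : ∃ σ : Equiv.Perm (Fin N), μ'' = hhh.eigenvalues ∘ σ) :
    χ μ'' ≤ χ μ + χ μ' :=
  symmetric_norm_spectrum_subadditive_general N χ hadd hhom hsym h h' hh hh' hhh μ μ' μ'' hμ hμ'
    hμ''
end

section
/- Ky Fan's inequality: for Hermitian N×N matrices h and h' and every 1 ≤ k ≤ N, the sum of the k largest eigenvalues of h + h' is at most the sum of the k largest eigenvalues of h plus the sum of the k largest eigenvalues of h'; moreover for k = N equality holds (trace additivity). -/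
/-!
For Hermitian `A` and any `Q` with `0 ≤ Q ≤ 1` and `tr Q = k`, writing `Q` in an eigenbasis of
`A` gives `Re tr (A Q) = ∑ λᵢ dᵢ` with weights `0 ≤ dᵢ ≤ 1` summing to `k`, and such a weighted
sum is at most the sum of the `k` largest `λᵢ`. For the spectral projection `Q` of `h + h'` onto
the eigenvectors of any `k` of its eigenvalues, `tr ((h + h') Q)` is exactly their sum, and it
splits as `tr (h Q) + tr (h' Q)`. For `k = N` both sides are traces.
-/

open Finset Matrix
open scoped ComplexOrder

theorem Finset.sum_mul_le_sum_of_threshold {ι : Type*} [Fintype ι] (S : Finset ι)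
    {μ d : ι → ℝ} {t : ℝ} (hS : ∀ i ∈ S, t ≤ μ i) (hSc : ∀ i ∉ S, μ i ≤ t)
    (hd0 : ∀ i, 0 ≤ d i) (hd1 : ∀ i, d i ≤ 1) (hd : ∑ i, d i = #S) :
    ∑ i, μ i * d i ≤ ∑ i ∈ S, μ i := by
  classical
  have hterm : ∀ i, (μ i - t) * (d i - if i ∈ S then 1 else 0) ≤ 0 := by
    intro i
    split_ifs with hi
    · exact mul_nonpos_of_nonneg_of_nonpos (by linarith [hS i hi]) (by linarith [hd1 i])
    · exact mul_nonpos_of_nonpos_of_nonneg (by linarith [hSc i hi]) (by linarith [hd0 i])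
  have hsplit : ∑ i, (μ i - t) * (d i - if i ∈ S then 1 else 0) =
      ∑ i, μ i * d i - ∑ i ∈ S, μ i := by
    simp only [sub_mul, mul_sub, mul_ite, mul_one, mul_zero, sum_sub_distrib, ← mul_sum, hd,
      sum_ite_mem, univ_inter, sum_const, nsmul_eq_mul]
    ring
  linarith [sum_nonpos (s := univ) fun i _ => hterm i]

theorem Antitone.sum_mul_le_sum_filter_lt {N k : ℕ} (hk : 0 < k) (hkN : k ≤ N)
    {μ d : Fin N → ℝ} (hμ : Antitone μ) (hd0 : ∀ i, 0 ≤ d i) (hd1 : ∀ i, d i ≤ 1)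
    (hd : ∑ i, d i = k) :
    ∑ i, μ i * d i ≤ ∑ i ∈ univ.filter (fun i : Fin N => (i : ℕ) < k), μ i := by
  refine sum_mul_le_sum_of_threshold _ (t := μ ⟨k - 1, by omega⟩) (fun i hi => hμ ?_)
    (fun i hi => hμ ?_) hd0 hd1 ?_
  · simp only [mem_filter, mem_univ, true_and] at hi
    exact Fin.le_def.mpr (by dsimp only; omega)
  · simp only [mem_filter, mem_univ, true_and, not_lt] at hi
    exact Fin.le_def.mpr (by dsimp only; omega)
  · rw [hd, Fin.card_filter_val_lt, min_eq_right hkN]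

namespace Matrix.IsHermitian

variable {𝕜 : Type*} [RCLike 𝕜]

section

variable {n : Type*} [Fintype n] [DecidableEq n] {A : Matrix n n 𝕜} (hA : A.IsHermitian)

theorem trace_mul_eq_sum_eigenvalues_mul (Q : Matrix n n 𝕜) :
    (A * Q).trace = ∑ i, (hA.eigenvalues i : 𝕜) *
      (star (hA.eigenvectorUnitary : Matrix n n 𝕜) * Q * hA.eigenvectorUnitary) i i := by
  conv_lhs => rw [hA.spectral_theorem, Unitary.conjStarAlgAut_apply]
  rw [mul_assoc, trace_mul_comm, ← mul_assoc]
  simp only [trace, diag, mul_diagonal, Function.comp_apply, mul_comm]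

noncomputable def eigenprojection (T : Finset n) : Matrix n n 𝕜 :=
  (hA.eigenvectorUnitary : Matrix n n 𝕜) * diagonal (fun i => if i ∈ T then 1 else 0) *
    star (hA.eigenvectorUnitary : Matrix n n 𝕜)

theorem star_eigenvectorUnitary_mul_eigenprojection_mul (T : Finset n) :
    star (hA.eigenvectorUnitary : Matrix n n 𝕜) * hA.eigenprojection T *
      (hA.eigenvectorUnitary : Matrix n n 𝕜) =
      diagonal (fun i => if i ∈ T then 1 else 0) := by
  have hUU := Unitary.star_mul_self_of_mem hA.eigenvectorUnitary.2
  simp only [eigenprojection, ← mul_assoc, hUU, one_mul]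
  simp only [mul_assoc, hUU, mul_one]

theorem eigenprojection_add_eigenprojection_compl (T : Finset n) :
    hA.eigenprojection T + hA.eigenprojection Tᶜ = 1 := by
  have : (diagonal fun i => if i ∈ T then 1 else 0) +
      (diagonal fun i => if i ∈ Tᶜ then 1 else 0) = (1 : Matrix n n 𝕜) := by
    rw [diagonal_add, ← diagonal_one]
    congr 1; ext i
    by_cases hi : i ∈ T <;> simp [hi]
  rw [eigenprojection, eigenprojection, ← add_mul, ← mul_add, this, mul_one,
    Unitary.mul_star_self_of_mem hA.eigenvectorUnitary.2]

theorem posSemidef_eigenprojection (T : Finset n) : (hA.eigenprojection T).PosSemidef := by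
  rw [eigenprojection, star_eq_conjTranspose]
  refine (PosSemidef.diagonal fun i => ?_).mul_mul_conjTranspose_same _
  split_ifs <;> simp

theorem posSemidef_one_sub_eigenprojection (T : Finset n) :
    (1 - hA.eigenprojection T).PosSemidef := by
  rw [← hA.eigenprojection_add_eigenprojection_compl T, add_sub_cancel_left]
  exact hA.posSemidef_eigenprojection Tᶜ

theorem trace_mul_eigenprojection (T : Finset n) :
    (A * hA.eigenprojection T).trace = ∑ i ∈ T, (hA.eigenvalues i : 𝕜) := by
  simp [hA.trace_mul_eq_sum_eigenvalues_mul, star_eigenvectorUnitary_mul_eigenprojection_mul]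

theorem trace_eigenprojection (T : Finset n) : (hA.eigenprojection T).trace = #T := by
  rw [eigenprojection, trace_mul_cycle, Unitary.star_mul_self_of_mem hA.eigenvectorUnitary.2,
    one_mul, trace_diagonal]
  simp

theorem sum_eigenvalues_add {B : Matrix n n 𝕜} (hB : B.IsHermitian) (hAB : (A + B).IsHermitian) :
    ∑ i, hAB.eigenvalues i = ∑ i, hA.eigenvalues i + ∑ i, hB.eigenvalues i := by
  have h := hAB.trace_eq_sum_eigenvalues
  rw [trace_add, hA.trace_eq_sum_eigenvalues, hB.trace_eq_sum_eigenvalues] at h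
  exact_mod_cast h.symm

end

theorem re_trace_mul_le_sum_filter_lt {N k : ℕ} {A : Matrix (Fin N) (Fin N) 𝕜}
    (hA : A.IsHermitian) {σ : Equiv.Perm (Fin N)} (hσ : Antitone (hA.eigenvalues ∘ σ))
    (hk : 0 < k) (hkN : k ≤ N) {Q : Matrix (Fin N) (Fin N) 𝕜} (hQ : Q.PosSemidef)
    (hQ1 : (1 - Q).PosSemidef) (htr : RCLike.re Q.trace = k) :
    RCLike.re (A * Q).trace ≤
      ∑ i ∈ univ.filter (fun i : Fin N => (i : ℕ) < k), hA.eigenvalues (σ i) := by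
  set U := (hA.eigenvectorUnitary : Matrix (Fin N) (Fin N) 𝕜)
  have hUU : star U * U = 1 := Unitary.star_mul_self_of_mem hA.eigenvectorUnitary.2
  set M := star U * Q * U
  set d : Fin N → ℝ := fun i => RCLike.re (M i i)
  have hd0 : ∀ i, 0 ≤ d i := fun i =>
    (RCLike.nonneg_iff.mp (hQ.conjTranspose_mul_mul_same U).diag_nonneg).1
  have hd1 : ∀ i, d i ≤ 1 := by
    intro i
    have hM1 : Uᴴ * (1 - Q) * U = 1 - M := by
      rw [mul_sub, sub_mul, mul_one, ← star_eq_conjTranspose, hUU]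
    have := (RCLike.nonneg_iff.mp ((hQ1.conjTranspose_mul_mul_same U).diag_nonneg (i := i))).1
    simpa [hM1, d] using this
  have hd : ∑ i, d i = k := by
    have hdM : ∑ i, d i = RCLike.re M.trace := by simp [trace, d]
    rw [hdM, trace_mul_cycle, Unitary.mul_star_self_of_mem hA.eigenvectorUnitary.2, one_mul, htr]
  have hre : RCLike.re (A * Q).trace = ∑ i, hA.eigenvalues i * d i := by
    simp [hA.trace_mul_eq_sum_eigenvalues_mul, d, M, U]
  rw [hre, ← Equiv.sum_comp σ]
  exact hσ.sum_mul_le_sum_filter_lt hk hkN (fun _ => hd0 _) (fun _ => hd1 _)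
    (by rw [Equiv.sum_comp σ d, hd])

end Matrix.IsHermitian

theorem kyFan_inequality_general
    (N : ℕ) (h h' : Matrix (Fin N) (Fin N) ℂ)
    (hh : h.IsHermitian) (hh' : h'.IsHermitian) (hhh : (h + h').IsHermitian)
    (μ μ' μ'' : Fin N → ℝ)
    (hμa : Antitone μ) (hμ'a : Antitone μ')
    (hμ : ∃ σ : Equiv.Perm (Fin N), μ = hh.eigenvalues ∘ σ)
    (hμ' : ∃ σ : Equiv.Perm (Fin N), μ' = hh'.eigenvalues ∘ σ)
    (hμ'' : ∃ σ : Equiv.Perm (Fin N), μ'' = hhh.eigenvalues ∘ σ) :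
    (∀ k : ℕ, 1 ≤ k → k ≤ N →
        ∑ i ∈ Finset.univ.filter (fun i : Fin N => (i : ℕ) < k), μ'' i ≤
          ∑ i ∈ Finset.univ.filter (fun i : Fin N => (i : ℕ) < k), μ i +
            ∑ i ∈ Finset.univ.filter (fun i : Fin N => (i : ℕ) < k), μ' i) ∧
      ∑ i, μ'' i = ∑ i, μ i + ∑ i, μ' i := by
  obtain ⟨σ, rfl⟩ := hμ
  obtain ⟨σ', rfl⟩ := hμ'
  obtain ⟨σ'', rfl⟩ := hμ''
  refine ⟨fun k hk hkN => ?_, ?_⟩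
  · set S := univ.filter (fun i : Fin N => (i : ℕ) < k)
    set T := S.map σ''.toEmbedding
    set P := hhh.eigenprojection T
    have hP := hhh.posSemidef_eigenprojection T
    have hP1 := hhh.posSemidef_one_sub_eigenprojection T
    have htr : RCLike.re P.trace = k := by
      simp [P, T, S, IsHermitian.trace_eigenprojection, Fin.card_filter_val_lt, hkN]
    calc ∑ i ∈ S, (hhh.eigenvalues ∘ σ'') i = RCLike.re ((h + h') * P).trace := by
          simp [P, T, IsHermitian.trace_mul_eigenprojection, sum_map]
      _ = RCLike.re (h * P).trace + RCLike.re (h' * P).trace := by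
          rw [add_mul, trace_add, map_add]
      _ ≤ _ := add_le_add (hh.re_trace_mul_le_sum_filter_lt hμa hk hkN hP hP1 htr)
          (hh'.re_trace_mul_le_sum_filter_lt hμ'a hk hkN hP hP1 htr)
  · simp only [Function.comp_apply, Equiv.sum_comp]
    exact hh.sum_eigenvalues_add hh' hhh

/-- Ky Fan's inequality: the sum of the `k` largest eigenvalues is subadditive,
with equality (trace additivity) for `k = N`. -/
theorem kyFan_inequality
    (N : ℕ) (h h' : Matrix (Fin N) (Fin N) ℂ)
    (hh : h.IsHermitian) (hh' : h'.IsHermitian) (hhh : (h + h').IsHermitian)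
    (μ μ' μ'' : Fin N → ℝ)
    (hμa : Antitone μ) (hμ'a : Antitone μ') (hμ''a : Antitone μ'')
    (hμ : ∃ σ : Equiv.Perm (Fin N), μ = hh.eigenvalues ∘ σ)
    (hμ' : ∃ σ : Equiv.Perm (Fin N), μ' = hh'.eigenvalues ∘ σ)
    (hμ'' : ∃ σ : Equiv.Perm (Fin N), μ'' = hhh.eigenvalues ∘ σ) :
    (∀ k : ℕ, 1 ≤ k → k ≤ N →
        ∑ i ∈ Finset.univ.filter (fun i : Fin N => (i : ℕ) < k), μ'' i ≤
          ∑ i ∈ Finset.univ.filter (fun i : Fin N => (i : ℕ) < k), μ i +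
            ∑ i ∈ Finset.univ.filter (fun i : Fin N => (i : ℕ) < k), μ' i) ∧
      ∑ i, μ'' i = ∑ i, μ i + ∑ i, μ' i :=
  kyFan_inequality_general N h h' hh hh' hhh μ μ' μ'' hμa hμ'a hμ hμ' hμ''
end

section
/- Let F : ℝ^n → ℝ be convex and Lipschitz. If along every nonzero direction v ∈ ℝ^n the slope at infinity lim_{t→∞} F(x_0 + tv)/t is strictly positive, then F is coercive: there exist δ, C > 0 such that F(x) ≥ δ‖x − x_0‖ − C for all x ∈ ℝ^n. -/
/-!
Along a ray from `x₀`, convexity makes the secant slope `(F (x₀ + t • v) - F x₀) / t` nondecreasing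
in `t`, so once `F` exceeds `F x₀ + 1` on a ray it stays above it further out. The sets of unit
directions where this has happened by time `k` are open and increasing, and a positive slope at
infinity puts every direction in one of them; compactness of the sphere gives one time `T` for all
directions. Monotonicity of the slope then yields `F x - F x₀ ≥ ‖x - x₀‖ / T` outside the ball of
radius `T`, and `F` is bounded below on that ball since convex functions on `ℝⁿ` are continuous.
-/

open Filter Set Metric

section Ray

variable {E : Type*} [AddCommGroup E] [Module ℝ E] {F : E → ℝ}

theorem ConvexOn.comp_ray (hF : ConvexOn ℝ univ F) (x₀ v : E) :
    ConvexOn ℝ univ (fun t : ℝ => F (x₀ + t • v)) := by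
  have hline : (fun t : ℝ => F (x₀ + t • v)) = F ∘ AffineMap.lineMap x₀ (x₀ + v) := by
    ext t
    simp only [Function.comp_apply, AffineMap.lineMap_apply_module, smul_add, sub_smul, one_smul]
    abel_nf
  simpa [hline] using hF.comp_affineMap (AffineMap.lineMap x₀ (x₀ + v))

theorem ConvexOn.ray_secant_mono (hF : ConvexOn ℝ univ F) (x₀ v : E) {s t : ℝ}
    (hs : 0 < s) (hst : s ≤ t) :
    (F (x₀ + s • v) - F x₀) / s ≤ (F (x₀ + t • v) - F x₀) / t := by
  simpa using (hF.comp_ray x₀ v).secant_mono (a := 0) (mem_univ _) (mem_univ s) (mem_univ t)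
    hs.ne' (hs.trans_le hst).ne' hst

theorem ConvexOn.ray_mono_of_base_le (hF : ConvexOn ℝ univ F) (x₀ v : E) {s t : ℝ}
    (hs : 0 < s) (hst : s ≤ t) (hbase : F x₀ ≤ F (x₀ + s • v)) :
    F (x₀ + s • v) ≤ F (x₀ + t • v) := by
  have ht := hs.trans_le hst
  have hsec := hF.ray_secant_mono x₀ v hs hst
  rw [div_le_div_iff₀ hs ht] at hsec
  nlinarith

end Ray

theorem tendsto_atTop_of_tendsto_div_pos {g : ℝ → ℝ} {L : ℝ} (hL : 0 < L)
    (h : Tendsto (fun t => g t / t) atTop (nhds L)) : Tendsto g atTop atTop :=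
  (h.pos_mul_atTop hL tendsto_id).congr' <| (eventually_ne_atTop 0).mono fun t ht => by
    simp [div_mul_cancel₀ _ ht]

section Coercive

variable {E : Type*} [NormedAddCommGroup E] [NormedSpace ℝ E] {F : E → ℝ}

theorem ConvexOn.exists_forall_add_one_lt_ray (hF : ConvexOn ℝ univ F)
    (hFc : Continuous F) (x₀ : E) {S : Set E} (hS : IsCompact S)
    (hray : ∀ v ∈ S, Tendsto (fun t : ℝ => F (x₀ + t • v)) atTop atTop) :
    ∃ T : ℝ, 0 < T ∧ ∀ v ∈ S, F x₀ + 1 < F (x₀ + T • v) := by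
  set U : ℕ → Set E := fun k => {v | F x₀ + 1 < F (x₀ + ((k : ℝ) + 1) • v)}
  have hU_open : ∀ k, IsOpen (U k) := fun k =>
    isOpen_lt continuous_const (hFc.comp (continuous_const.add (continuous_const_smul _)))
  have hU_mono : Monotone U := fun k m hkm v hv => by
    refine hv.trans_le (hF.ray_mono_of_base_le x₀ v (by positivity) ?_ ((lt_add_one _).trans hv).le)
    exact_mod_cast Nat.add_le_add_right hkm 1
  have hS_cover : S ⊆ ⋃ k, U k := fun v hv => by
    have hk : Tendsto (fun k : ℕ => (k : ℝ) + 1) atTop atTop :=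
      tendsto_natCast_atTop_atTop.atTop_add tendsto_const_nhds
    obtain ⟨k, hk⟩ := ((hray v hv).comp hk).eventually_gt_atTop (F x₀ + 1) |>.exists
    exact mem_iUnion.2 ⟨k, hk⟩
  obtain ⟨k, hk⟩ := hS.elim_directed_cover U hU_open hS_cover hU_mono.directed_le
  exact ⟨k + 1, by positivity, hk⟩

theorem ConvexOn.inv_mul_norm_sub_le (hF : ConvexOn ℝ univ F) {x₀ x : E} {T : ℝ} (hT : 0 < T)
    (hTS : ∀ v ∈ sphere (0 : E) 1, F x₀ + 1 < F (x₀ + T • v)) (hTx : T ≤ ‖x - x₀‖) :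
    T⁻¹ * ‖x - x₀‖ ≤ F x - F x₀ := by
  set r := ‖x - x₀‖
  have hr : 0 < r := hT.trans_le hTx
  set v := r⁻¹ • (x - x₀)
  have hxv : x₀ + r • v = x := by simp [v, smul_smul, mul_inv_cancel₀ hr.ne']
  have hv : v ∈ sphere (0 : E) 1 := by
    rw [mem_sphere_zero_iff_norm, norm_smul, norm_inv, Real.norm_of_nonneg hr.le,
      inv_mul_cancel₀ hr.ne']
  have hsec := hF.ray_secant_mono x₀ v hT hTx
  rw [hxv, div_le_div_iff₀ hT hr] at hsec
  rw [inv_mul_le_iff₀ hT]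
  nlinarith [hTS v hv]

theorem ConvexOn.exists_coercive_bound [FiniteDimensional ℝ E] (hF : ConvexOn ℝ univ F) (x₀ : E)
    (hray : ∀ v : E, ‖v‖ = 1 → Tendsto (fun t : ℝ => F (x₀ + t • v)) atTop atTop) :
    ∃ δ C : ℝ, 0 < δ ∧ 0 < C ∧ ∀ x, δ * ‖x - x₀‖ - C ≤ F x := by
  have hFc : Continuous F := hF.locallyLipschitz.continuous
  obtain ⟨T, hT, hTS⟩ := hF.exists_forall_add_one_lt_ray hFc x₀ (isCompact_sphere 0 1)
    fun v hv => hray v (mem_sphere_zero_iff_norm.mp hv)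
  obtain ⟨m, hm_ball⟩ := (isCompact_closedBall x₀ T).bddBelow_image hFc.continuousOn
  have hm : ∀ y, ‖y - x₀‖ ≤ T → m ≤ F y := fun y hy =>
    hm_ball ⟨y, mem_closedBall_iff_norm.mpr hy, rfl⟩
  refine ⟨T⁻¹, |m| + 1, by positivity, by positivity, fun x => ?_⟩
  have hx₀ : m ≤ F x₀ := hm x₀ (by simpa using hT.le)
  rcases le_or_gt ‖x - x₀‖ T with hle | hgt
  · have : T⁻¹ * ‖x - x₀‖ ≤ 1 := by rwa [inv_mul_le_iff₀ hT, mul_one]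
    linarith [hm x hle, neg_abs_le m]
  · linarith [hF.inv_mul_norm_sub_le hT hTS hgt.le, neg_abs_le m]

end Coercive

theorem coercive_of_positive_slopes_general
    (n : ℕ) (F : EuclideanSpace ℝ (Fin n) → ℝ)
    (hF : ConvexOn ℝ Set.univ F)
    (x₀ : EuclideanSpace ℝ (Fin n))
    (hslope : ∀ v : EuclideanSpace ℝ (Fin n), v ≠ 0 →
      ∃ L : ℝ, 0 < L ∧
        Tendsto (fun t : ℝ => F (x₀ + t • v) / t) atTop (nhds L)) :
    ∃ δ C : ℝ, 0 < δ ∧ 0 < C ∧ ∀ x, δ * ‖x - x₀‖ - C ≤ F x := by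
  refine hF.exists_coercive_bound x₀ fun v hv => ?_
  obtain ⟨L, hL, hlim⟩ := hslope v (norm_ne_zero_iff.mp (by simp [hv]))
  exact tendsto_atTop_of_tendsto_div_pos hL hlim

/-- If a convex Lipschitz function on `ℝⁿ` has strictly positive slope at
infinity along every nonzero direction, then it is coercive. -/
theorem coercive_of_positive_slopes
    (n : ℕ) (F : EuclideanSpace ℝ (Fin n) → ℝ) (K : NNReal)
    (hF : ConvexOn ℝ Set.univ F) (hlip : LipschitzWith K F)
    (x₀ : EuclideanSpace ℝ (Fin n))
    (hslope : ∀ v : EuclideanSpace ℝ (Fin n), v ≠ 0 →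
      ∃ L : ℝ, 0 < L ∧
        Tendsto (fun t : ℝ => F (x₀ + t • v) / t) atTop (nhds L)) :
    ∃ δ C : ℝ, 0 < δ ∧ 0 < C ∧ ∀ x, δ * ‖x - x₀‖ - C ≤ F x :=
  coercive_of_positive_slopes_general n F hF x₀ hslope
end

section
/- Let F : ℝ^n → ℝ be convex, Lipschitz, and suppose F admits a unique minimizer. Then F is coercive: there exist δ, C > 0 with F(x) ≥ δ‖x − x_0‖ − C for all x, where x_0 is the minimizer. -/
/-!
Convex functions on `ℝⁿ` are continuous, so on the compact unit sphere around `x₀` the function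
attains its minimum, which uniqueness of the minimizer makes strictly larger than `F x₀`: say
`F ≥ F x₀ + δ` there. Convexity along the segment from `x₀` to a point `x` with `‖x - x₀‖ ≥ 1`
then turns this gap into the linear growth `F x ≥ F x₀ + δ ‖x - x₀‖`.
-/

open Set Metric

theorem ConvexOn.add_mul_norm_sub_le_of_le_on_sphere {E : Type*} [NormedAddCommGroup E]
    [NormedSpace ℝ E] {F : E → ℝ} (hF : ConvexOn ℝ univ F) {x₀ x : E} {δ : ℝ}
    (hsphere : ∀ y ∈ sphere x₀ 1, F x₀ + δ ≤ F y) (hx : 1 ≤ ‖x - x₀‖) :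
    F x₀ + δ * ‖x - x₀‖ ≤ F x := by
  set r := ‖x - x₀‖
  have hr : 0 < r := one_pos.trans_le hx
  have hz : x₀ + r⁻¹ • (x - x₀) ∈ sphere x₀ 1 := by
    simp [norm_smul, inv_mul_cancel₀ hr.ne', r]
  have hconv : F (x₀ + r⁻¹ • (x - x₀)) ≤ (1 - r⁻¹) * F x₀ + r⁻¹ * F x := by
    have hseg : x₀ + r⁻¹ • (x - x₀) = (1 - r⁻¹) • x₀ + r⁻¹ • x := by module
    rw [hseg]
    exact hF.2 (mem_univ x₀) (mem_univ x) (sub_nonneg.2 (inv_le_one_of_one_le₀ hx))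
      (inv_nonneg.2 hr.le) (sub_add_cancel 1 r⁻¹)
  have hgap : δ ≤ r⁻¹ * (F x - F x₀) := by linarith [hsphere _ hz]
  calc F x₀ + δ * r ≤ F x₀ + r⁻¹ * (F x - F x₀) * r := by gcongr
    _ = F x := by field_simp; ring

theorem coercive_of_unique_minimizer_general
    (n : ℕ) (F : EuclideanSpace ℝ (Fin n) → ℝ)
    (hF : ConvexOn ℝ Set.univ F)
    (x₀ : EuclideanSpace ℝ (Fin n))
    (hmin : ∀ y, F x₀ ≤ F y)
    (huniq : ∀ y, (∀ z, F y ≤ F z) → y = x₀) :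
    ∃ δ C : ℝ, 0 < δ ∧ 0 < C ∧ ∀ x, δ * ‖x - x₀‖ - C ≤ F x := by
  have hcont : Continuous F := continuousOn_univ.mp (hF.continuousOn isOpen_univ)
  have hsphere : ∀ y ∈ sphere x₀ 1, F x₀ < F y := fun y hy ↦ (hmin y).lt_of_ne fun h ↦
    ne_of_mem_sphere hy one_ne_zero (huniq y fun z ↦ h ▸ hmin z)
  obtain ⟨m, hm, hm_le⟩ := (isCompact_sphere x₀ 1).exists_forall_le' hcont.continuousOn hsphere
  refine ⟨m - F x₀, max (m - 2 * F x₀) 1, sub_pos.2 hm, by positivity, fun x ↦ ?_⟩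
  have hC := le_max_left (m - 2 * F x₀) 1
  rcases le_or_gt 1 ‖x - x₀‖ with hx | hx
  · have := hF.add_mul_norm_sub_le_of_le_on_sphere (δ := m - F x₀)
      (fun y hy ↦ by linarith [hm_le y hy]) hx
    linarith
  · nlinarith [hmin x]

/-- A convex Lipschitz function on `ℝⁿ` with a unique minimizer is coercive. -/
theorem coercive_of_unique_minimizer
    (n : ℕ) (F : EuclideanSpace ℝ (Fin n) → ℝ) (K : NNReal)
    (hF : ConvexOn ℝ Set.univ F) (hlip : LipschitzWith K F)
    (x₀ : EuclideanSpace ℝ (Fin n))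
    (hmin : ∀ y, F x₀ ≤ F y)
    (huniq : ∀ y, (∀ z, F y ≤ F z) → y = x₀) :
    ∃ δ C : ℝ, 0 < δ ∧ 0 < C ∧ ∀ x, δ * ‖x - x₀‖ - C ≤ F x :=
  coercive_of_unique_minimizer_general n F hF x₀ hmin huniq
end

section
/- Every non-Archimedean norm α on a finite-dimensional complex vector space V (with respect to the trivial absolute value on ℂ) is diagonalizable: there exists a basis e_1, ..., e_N of V and reals λ_1, ..., λ_N such that α(Σ v_i e_i) = max over indices i with v_i ≠ 0 of e^{−λ_i}. -/
/-!
The balls `{v | α v < r}` are subspaces, and on the values of `α` they grow strictly with `r`;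
since `V` is Noetherian, `α` therefore attains a largest value `s`. The ball `W = {α < s}` is a
proper subspace, and every vector outside it has the maximal value `s`. Hence an orthogonal basis
of `W` (by induction on the dimension) followed by any basis of a complement of `W` is orthogonal
for `α`, i.e. `α vᵢ ≥ α eᵢ` whenever the `i`-th coordinate of `v` is nonzero. The ultrametric
inequality gives the reverse bound `α v ≤ max α eᵢ`, and `λᵢ = -log α eᵢ`.
-/

open Module Submodule

/-- A non-archimedean norm on `V` with respect to the trivial absolute value on `K`. -/
structure IsTrivialNonarchNorm (K : Type*) {V : Type*} [DivisionRing K] [AddCommGroup V] [Module K V]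
    (α : V → ℝ) : Prop where
  nonneg : ∀ v, 0 ≤ α v
  isNonarchimedean : IsNonarchimedean α
  smul_eq : ∀ τ : K, τ ≠ 0 → ∀ v, α (τ • v) = α v
  eq_zero_iff : ∀ v, α v = 0 ↔ v = 0

namespace IsTrivialNonarchNorm

variable {K V : Type*} [DivisionRing K] [AddCommGroup V] [Module K V] {α : V → ℝ}

lemma map_zero (hα : IsTrivialNonarchNorm K α) : α 0 = 0 := (hα.eq_zero_iff 0).2 rfl

lemma pos_of_ne_zero (hα : IsTrivialNonarchNorm K α) {v : V} (hv : v ≠ 0) : 0 < α v :=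
  (hα.nonneg v).lt_of_ne' (mt (hα.eq_zero_iff v).1 hv)

lemma comp_subtype (hα : IsTrivialNonarchNorm K α) (W : Submodule K V) :
    IsTrivialNonarchNorm K fun w : W ↦ α w where
  nonneg w := hα.nonneg w
  isNonarchimedean w w' := hα.isNonarchimedean w w'
  smul_eq τ hτ w := hα.smul_eq τ hτ w
  eq_zero_iff w := by simp [hα.eq_zero_iff]

def ball (hα : IsTrivialNonarchNorm K α) {r : ℝ} (hr : 0 < r) : Submodule K V where
  carrier := {v | α v < r}
  add_mem' ha hb := (hα.isNonarchimedean _ _).trans_lt (max_lt ha hb)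
  zero_mem' := by simpa [hα.map_zero] using hr
  smul_mem' c v hv := by
    rcases eq_or_ne c 0 with rfl | hc
    · simpa [hα.map_zero] using hr
    · simpa [hα.smul_eq c hc] using hv

lemma mem_ball (hα : IsTrivialNonarchNorm K α) {r : ℝ} (hr : 0 < r) {v : V} :
    v ∈ hα.ball hr ↔ α v < r := Iff.rfl

lemma exists_max [FiniteDimensional K V] (hα : IsTrivialNonarchNorm K α) :
    ∃ v₀, ∀ v, α v ≤ α v₀ := by
  rcases subsingleton_or_nontrivial V with hV | hV
  · exact ⟨0, fun v ↦ (congrArg α (Subsingleton.elim v 0)).le⟩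
  obtain ⟨w, hw⟩ := exists_ne (0 : V)
  let B (v : {v : V // v ≠ 0}) : Submodule K V := hα.ball (hα.pos_of_ne_zero v.2)
  obtain ⟨_, ⟨⟨v₀, hv₀⟩, rfl⟩, hmax⟩ := wellFounded_gt.has_min (Set.range B) ⟨_, ⟨w, hw⟩, rfl⟩
  refine ⟨v₀, fun v ↦ ?_⟩
  rcases eq_or_ne v 0 with rfl | hv
  · rw [hα.map_zero]; exact hα.nonneg v₀
  by_contra! hlt
  have hle : B ⟨v₀, hv₀⟩ ≤ B ⟨v, hv⟩ := fun u hu ↦ (mem_ball ..).2 (((mem_ball ..).1 hu).trans hlt)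
  exact hmax _ ⟨_, rfl⟩ (SetLike.lt_iff_le_and_exists.2 ⟨hle, v₀, hlt, lt_irrefl (α v₀)⟩)

end IsTrivialNonarchNorm

section OrthogonalBasis

variable {K V ι κ : Type*} [Ring K] [AddCommGroup V] [Module K V] {α : V → ℝ}

def IsOrthogonalBasis (α : V → ℝ) (b : Basis ι K V) : Prop :=
  ∀ v i, b.repr v i ≠ 0 → α (b i) ≤ α v

lemma IsOrthogonalBasis.reindex {b : Basis ι K V} (hb : IsOrthogonalBasis α b) (e : ι ≃ κ) :
    IsOrthogonalBasis α (b.reindex e) := by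
  intro v i hi
  rw [Basis.repr_reindex_apply] at hi
  simpa using hb v _ hi

lemma IsOrthogonalBasis.prodEquivOfIsCompl {W W' : Submodule K V} (h : IsCompl W W')
    {f : Basis ι K W} (hf : IsOrthogonalBasis (fun w : W ↦ α w) f) (g : Basis κ K W')
    (hmax : ∀ v ∉ W, ∀ u, α u ≤ α v) :
    IsOrthogonalBasis α ((f.prod g).map (W.prodEquivOfIsCompl W' h)) := by
  intro v i hi
  by_cases hv : v ∈ W
  · have hsymm : (W.prodEquivOfIsCompl W' h).symm v = ((⟨v, hv⟩ : W), 0) :=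
      prodEquivOfIsCompl_symm_apply_left W W' h ⟨v, hv⟩
    rcases i with j | j
    · simp only [Basis.map_repr, LinearEquiv.trans_apply, hsymm, Basis.prod_repr_inl] at hi
      simpa [Basis.prod_apply] using hf ⟨v, hv⟩ j hi
    · simp [hsymm] at hi
  · exact hmax v hv _

lemma IsOrthogonalBasis.isGreatest (hα : IsNonarchimedean α)
    (hscal : ∀ τ : K, τ ≠ 0 → ∀ v, α (τ • v) = α v) {b : Basis ι K V}
    (hb : IsOrthogonalBasis α b) {v : V} (hv : v ≠ 0) :
    IsGreatest {r | ∃ i, b.repr v i ≠ 0 ∧ r = α (b i)} (α v) := by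
  have hsupp : (b.repr v).support.Nonempty := by simpa using hv
  obtain ⟨i, hi, hle⟩ := hα.finset_image_add_of_nonempty (fun i ↦ b.repr v i • b i) hsupp
  rw [Finsupp.mem_support_iff] at hi
  have hsum : ∑ j ∈ (b.repr v).support, b.repr v j • b j = v := by
    simpa [Finsupp.linearCombination_apply, Finsupp.sum] using b.linearCombination_repr v
  rw [hsum, hscal _ hi] at hle
  refine ⟨⟨i, hi, le_antisymm hle (hb v i hi)⟩, ?_⟩
  rintro _ ⟨j, hj, rfl⟩
  exact hb v j hj

end OrthogonalBasis

namespace IsTrivialNonarchNorm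

theorem exists_isOrthogonalBasis {K V : Type*} [DivisionRing K] [AddCommGroup V] [Module K V]
    [FiniteDimensional K V] {α : V → ℝ} (hα : IsTrivialNonarchNorm K α) :
    ∃ b : Basis (Fin (finrank K V)) K V, IsOrthogonalBasis α b := by
  obtain ⟨n, hn⟩ : ∃ n, finrank K V = n := ⟨_, rfl⟩
  induction n using Nat.strong_induction_on generalizing V with
  | _ n ih =>
  rcases subsingleton_or_nontrivial V with hV | hV
  · exact ⟨finBasis K V, fun v i hi ↦ by simp [Subsingleton.elim v 0] at hi⟩
  obtain ⟨v₀, hv₀⟩ := hα.exists_max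
  obtain ⟨w, hw⟩ := exists_ne (0 : V)
  have hpos : 0 < α v₀ := (hα.pos_of_ne_zero hw).trans_le (hv₀ w)
  set W := hα.ball hpos
  have hW : W ≠ ⊤ := fun h ↦ lt_irrefl (α v₀) (h ▸ mem_top : v₀ ∈ W)
  obtain ⟨f, hf⟩ := ih _ (hn ▸ finrank_lt hW) (hα.comp_subtype W) rfl
  obtain ⟨W', hWW'⟩ := W.exists_isCompl
  have hmax : ∀ v ∉ W, ∀ u, α u ≤ α v := fun v hv u ↦ (hv₀ u).trans (not_lt.1 hv)
  exact ⟨_, (hf.prodEquivOfIsCompl hWW' (finBasis K W') hmax).reindex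
    (finSumFinEquiv.trans (finCongr (finrank_add_eq_of_isCompl hWW')))⟩

end IsTrivialNonarchNorm

/-- Every non-Archimedean norm on a finite-dimensional complex vector space
(with respect to the trivial absolute value on `ℂ`) is diagonalizable in a
suitable basis. -/
theorem nonarchimedean_norm_diagonalizable
    {V : Type*} [AddCommGroup V] [Module ℂ V] [FiniteDimensional ℂ V]
    (N : ℕ) (hdim : Module.finrank ℂ V = N)
    (α : V → ℝ) (hnn : ∀ v, 0 ≤ α v)
    (hultra : ∀ v v', α (v + v') ≤ max (α v) (α v'))
    (hscal : ∀ (τ : ℂ), τ ≠ 0 → ∀ v, α (τ • v) = α v)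
    (hdef : ∀ v, α v = 0 ↔ v = 0) :
    ∃ (e : Module.Basis (Fin N) ℂ V) (lam : Fin N → ℝ),
      ∀ v : V, v ≠ 0 →
        α v = sSup {r : ℝ | ∃ i : Fin N, e.repr v i ≠ 0 ∧ r = Real.exp (-lam i)} := by
  have hα : IsTrivialNonarchNorm ℂ α := ⟨hnn, hultra, hscal, hdef⟩
  subst hdim
  obtain ⟨e, he⟩ := hα.exists_isOrthogonalBasis
  refine ⟨e, fun i ↦ -Real.log (α (e i)), fun v hv ↦ ?_⟩
  have hexp (i) : Real.exp (-(-Real.log (α (e i)))) = α (e i) := by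
    rw [neg_neg, Real.exp_log (hα.pos_of_ne_zero (e.ne_zero i))]
  simp only [hexp]
  exact (he.isGreatest hultra hscal hv).csSup_eq.symm
end

section
/- Let (u_t)_{t∈[a,b]} be a family of functions X → ℝ on a set X such that t ↦ u_t(x) is convex for each x, and assume the maximality (comparison) property: for any family (v_t) with t ↦ v_t(x) convex and lim_{t→a} v_t ≤ u_a, lim_{t→b} v_t ≤ u_b pointwise, one has v_t ≤ u_t for t ∈ (a,b). If m := sup_X(u_b − u_a) is finite, then sup_X(u_t − u_a) = m(t−a)/(b−a) for all t ∈ [a,b]. -/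
/-!
For fixed `x`, convexity of `t ↦ u_t(x)` bounds `u_t - u_a` above by the chord `(t - a)/(b - a) · m`.
Conversely, `v_t := u_b + (t - b)/(b - a) · m` is affine in `t`, lies below `u` at both endpoints
(at `a` because `m` bounds `u_b - u_a`), so maximality gives `v_t ≤ u_t`; hence every upper bound
of `u_t - u_a` plus `(b - t)/(b - a) · m` bounds `u_b - u_a`, and is therefore at least `m`.
-/

open Set

section LinearOrderedField

variable {𝕜 : Type*} [Field 𝕜] [LinearOrder 𝕜] [IsStrictOrderedRing 𝕜]

theorem ConvexOn.mul_sub_le_mul_sub_of_mem_Icc {f : 𝕜 → 𝕜} {a b t : 𝕜}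
    (hf : ConvexOn 𝕜 (Icc a b) f) (ht : t ∈ Icc a b) :
    (b - a) * (f t - f a) ≤ (t - a) * (f b - f a) := by
  rcases ht.1.eq_or_lt with rfl | hat
  · simp
  have hab := hat.trans_le ht.2
  have hsecant := hf.secant_mono (left_mem_Icc.2 hab.le) ht (right_mem_Icc.2 hab.le)
    hat.ne' hab.ne' ht.2
  rw [div_le_div_iff₀ (sub_pos.2 hat) (sub_pos.2 hab)] at hsecant
  linarith

theorem convexOn_add_sub_mul {s : Set 𝕜} (hs : Convex 𝕜 s) (c b k : 𝕜) :
    ConvexOn 𝕜 s fun t => c + (t - b) * k :=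
  ⟨hs, fun _ _ _ _ _ _ _ _ hpq => le_of_eq <| by
    simp only [smul_eq_mul]; linear_combination (c - b * k) * hpq.symm⟩

end LinearOrderedField

def IsMaximalFamily {X : Type*} (a b : ℝ) (u : ℝ → X → ℝ) : Prop :=
  ∀ v : ℝ → X → ℝ, (∀ x, ConvexOn ℝ (Icc a b) fun t => v t x) →
    (∀ x, v a x ≤ u a x) → (∀ x, v b x ≤ u b x) → ∀ t ∈ Ioo a b, ∀ x, v t x ≤ u t x

namespace IsMaximalFamily

variable {X : Type*} {a b m : ℝ} {u : ℝ → X → ℝ}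

theorem le_of_mem_Icc (hu : IsMaximalFamily a b u) {v : ℝ → X → ℝ}
    (hv : ∀ x, ConvexOn ℝ (Icc a b) fun t => v t x)
    (ha : ∀ x, v a x ≤ u a x) (hb : ∀ x, v b x ≤ u b x) {t : ℝ} (ht : t ∈ Icc a b) (x : X) :
    v t x ≤ u t x := by
  rcases ht.1.eq_or_lt with rfl | hat
  · exact ha x
  rcases ht.2.eq_or_lt with rfl | htb
  · exact hb x
  exact hu v hv ha hb t ⟨hat, htb⟩ x

theorem add_sub_mul_le (hu : IsMaximalFamily a b u) (hm : ∀ x, u b x - u a x ≤ m)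
    {t : ℝ} (ht : t ∈ Icc a b) (x : X) : u b x + (t - b) * (m / (b - a)) ≤ u t x := by
  rcases (ht.1.trans ht.2).eq_or_lt with rfl | hab
  · obtain rfl : t = a := by simpa using ht
    simp
  refine hu.le_of_mem_Icc (fun x => convexOn_add_sub_mul (convex_Icc a b) _ _ _)
    (fun x => ?_) (fun x => by simp) ht x
  have : (a - b) * (m / (b - a)) = -m := by field_simp; ring
  linarith [hm x]

end IsMaximalFamily

theorem isLUB_range_sub_of_isMaximalFamily {X : Type*} {a b m : ℝ} {u : ℝ → X → ℝ}
    (hab : a < b) (hconv : ∀ x, ConvexOn ℝ (Icc a b) fun t => u t x)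
    (hmax : IsMaximalFamily a b u) (hm : IsLUB (range fun x => u b x - u a x) m)
    {t : ℝ} (ht : t ∈ Icc a b) :
    IsLUB (range fun x => u t x - u a x) (m * (t - a) / (b - a)) := by
  have hba : 0 < b - a := sub_pos.2 hab
  have hbound (x : X) : u b x - u a x ≤ m := hm.1 ⟨x, rfl⟩
  constructor
  · rintro _ ⟨x, rfl⟩
    have hsecant := (hconv x).mul_sub_le_mul_sub_of_mem_Icc ht
    have := mul_le_mul_of_nonneg_left (hbound x) (sub_nonneg.2 ht.1)
    rw [le_div_iff₀ hba]
    linarith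
  · intro c hc
    have hmc : m ≤ c + (b - t) * (m / (b - a)) := hm.2 <| by
      rintro _ ⟨x, rfl⟩
      have := hmax.add_sub_mul_le hbound ht x
      have : u t x - u a x ≤ c := hc ⟨x, rfl⟩
      linarith
    have hchord : m * (t - a) / (b - a) = m - (b - t) * (m / (b - a)) := by field_simp; ring
    linarith

theorem sup_affine_along_maximal_family_general
    {X : Type*} (a b : ℝ) (hab : a < b)
    (u : ℝ → X → ℝ)
    (hconv : ∀ x, ConvexOn ℝ (Set.Icc a b) (fun t => u t x))
    (hmax : ∀ v : ℝ → X → ℝ,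
      (∀ x, ConvexOn ℝ (Set.Icc a b) (fun t => v t x)) →
      (∀ x, v a x ≤ u a x) → (∀ x, v b x ≤ u b x) →
      ∀ t ∈ Set.Ioo a b, ∀ x, v t x ≤ u t x)
    (m : ℝ) (hm : IsLUB (Set.range fun x => u b x - u a x) m) :
    ∀ t ∈ Set.Icc a b,
      sSup (Set.range fun x => u t x - u a x) = m * (t - a) / (b - a) := by
  intro t ht
  have hlub := isLUB_range_sub_of_isMaximalFamily hab hconv hmax hm ht
  exact hlub.csSup_eq hlub.nonempty

/-- Abstract version of Darvas' lemma: along a maximal family of functions with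
convex time-slices, the sup `sup_X (u_t − u_a)` is affine in `t`. -/
theorem sup_affine_along_maximal_family
    {X : Type*} [Nonempty X] (a b : ℝ) (hab : a < b)
    (u : ℝ → X → ℝ)
    (hconv : ∀ x, ConvexOn ℝ (Set.Icc a b) (fun t => u t x))
    (hmax : ∀ v : ℝ → X → ℝ,
      (∀ x, ConvexOn ℝ (Set.Icc a b) (fun t => v t x)) →
      (∀ x, v a x ≤ u a x) → (∀ x, v b x ≤ u b x) →
      ∀ t ∈ Set.Ioo a b, ∀ x, v t x ≤ u t x)
    (m : ℝ) (hm : IsLUB (Set.range fun x => u b x - u a x) m) :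
    ∀ t ∈ Set.Icc a b,
      sSup (Set.range fun x => u t x - u a x) = m * (t - a) / (b - a) :=
  sup_affine_along_maximal_family_general a b hab u hconv hmax m hm
end
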